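/- Let k be a field, V a finite-dimensional k-vector space, and g : V → V a linear automorphism admitting a multiplicative Jordan decomposition g = s ∘ u = u ∘ s, where s is a diagonalizable automorphism of V (V is spanned by eigenvectors of s) and u is unipotent (u − id_V is nilpotent). Let V^s = ker(s − id_V) be the fixed space of s; then g maps V^s into itself, and the inclusion V^s ↪ V induces a quasi-isomorphism of two-term complexes [V^s →^{id−g} V^s] → [V →^{id−g} V]. Concretely: (a) ker(id_V − g) is contained in V^s, so ker(id_V − g) equals the kernel of the restriction of id_V − g to V^s; and (b) the inclusion induces an isomorphism V^s/(id_V − g)(V^s) ≅ V/(id_V − g)(V). -/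
import Mathlib

/-- If `a` is a unit commuting with `b`, there is a two-sided inverse of `a`
commuting with `b`. -/
lemma exists_inv_commute {R : Type*} [Ring R] {a b : R} (h : IsUnit a)
    (hc : Commute a b) : ∃ a' : R, a' * a = 1 ∧ a * a' = 1 ∧ Commute a' b := by
  obtain ⟨⟨a, a', h1, h2⟩, rfl⟩ := h
  refine ⟨a', h2, h1, ?_⟩
  show a' * b = b * a'
  calc a' * b = a' * (b * (a * a')) := by rw [h1, mul_one]
    _ = a' * (b * a * a') := by rw [mul_assoc]
    _ = a' * (a * b * a') := by rw [← hc.eq]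
    _ = a' * (a * (b * a')) := by rw [mul_assoc]
    _ = a' * a * (b * a') := by rw [← mul_assoc]
    _ = b * a' := by rw [h2, one_mul]

/-- **Jordan decomposition and fixed spaces.** Let `k` be a field, `V` a finite-dimensional
`k`-vector space, and `g : V → V` a linear automorphism with multiplicative Jordan
decomposition `g = s * u = u * s`, where `s` is a diagonalizable automorphism
(`V` is spanned by the eigenspaces of `s`) and `u` is unipotent (`u - 1` is nilpotent).
Let `Vˢ = ker (s - 1)` be the fixed space of `s`. Then `g` maps `Vˢ` into itself and the
inclusion `Vˢ ↪ V` induces a quasi-isomorphism `[Vˢ → Vˢ] → [V → V]` of the two-term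
complexes given by `1 - g`; concretely:
(a) `ker (1 - g) ⊆ Vˢ` (so `ker (1 - g)` is the kernel of the restriction of `1 - g` to `Vˢ`),
and (b) the inclusion induces an isomorphism `Vˢ/(1 - g)(Vˢ) ≅ V/(1 - g)(V)`, i.e.
`Vˢ ⊔ range (1 - g) = ⊤` and `Vˢ ⊓ range (1 - g) = (1 - g)(Vˢ)`. -/
theorem jordan_decomposition_fixed_space_quasi_iso
    {k V : Type} [Field k] [AddCommGroup V] [Module k V] [FiniteDimensional k V]
    (g s u : Module.End k V)
    (hg : IsUnit g) (hs : IsUnit s) (hu : IsUnit u)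
    (hgsu : g = s * u) (hcomm : s * u = u * s)
    (hdiag : (⨆ μ : k, Module.End.eigenspace s μ) = ⊤)
    (hunip : IsNilpotent (u - 1)) :
    (∀ v ∈ LinearMap.ker (s - 1), g v ∈ LinearMap.ker (s - 1)) ∧
    LinearMap.ker (1 - g) ≤ LinearMap.ker (s - 1) ∧
    LinearMap.ker (s - 1) ⊔ LinearMap.range (1 - g) = ⊤ ∧
    LinearMap.ker (s - 1) ⊓ LinearMap.range (1 - g)
      = Submodule.map (1 - g) (LinearMap.ker (s - 1)) := by
  classical
  have hsu : Commute s u := hcomm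
  have hsN : Commute s (u - 1) := hsu.sub_right (Commute.one_right s)
  have hsg : Commute s g := by rw [hgsu]; exact (Commute.refl s).mul_right hsu
  -- `W = ker (s-1)` is the eigenspace of `s` for eigenvalue `1`.
  have hW : LinearMap.ker (s - 1) = Module.End.eigenspace s 1 := by
    ext v
    simp [Module.End.mem_eigenspace_iff, LinearMap.mem_ker, LinearMap.sub_apply,
      sub_eq_zero]
  -- each eigenspace is invariant under `g` (it commutes with `s`)
  have hginv : ∀ (μ : k) (v : V), v ∈ Module.End.eigenspace s μ →
      g v ∈ Module.End.eigenspace s μ := by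
    intro μ v hv
    rw [Module.End.mem_eigenspace_iff] at hv ⊢
    calc s (g v) = (s * g) v := rfl
    _ = (g * s) v := by rw [hsg.eq]
    _ = g (s v) := rfl
    _ = μ • g v := by rw [hv, map_smul]
  -- and under `u`
  have huinv : ∀ (μ : k) (v : V), v ∈ Module.End.eigenspace s μ →
      u v ∈ Module.End.eigenspace s μ := by
    intro μ v hv
    rw [Module.End.mem_eigenspace_iff] at hv ⊢
    calc s (u v) = (s * u) v := rfl
    _ = (u * s) v := by rw [hsu.eq]
    _ = u (s v) := rfl
    _ = μ • u v := by rw [hv, map_smul]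
  -- claim (a1)
  have hmemW : ∀ v ∈ LinearMap.ker (s - 1), g v ∈ LinearMap.ker (s - 1) := by
    intro v hv
    rw [hW] at hv ⊢
    exact hginv 1 v hv
  -- on the eigenspace for `μ`, `1 - g` acts as `A μ := (1-μ) • 1 - μ • (u-1)`
  have hAval : ∀ (μ : k) (v : V), v ∈ Module.End.eigenspace s μ →
      (1 - g) v = ((1 - μ) • (1 : Module.End k V) - μ • (u - 1)) v := by
    intro μ v hv
    have huv := huinv μ v hv
    have hgv : g v = μ • (u - 1) v + μ • v := by
      have h1 : g v = μ • u v := by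
        rw [hgsu]
        calc (s * u) v = s (u v) := rfl
        _ = μ • u v := Module.End.mem_eigenspace_iff.mp huv
      rw [h1]
      simp only [LinearMap.sub_apply, Module.End.one_apply, smul_sub]
      abel
    simp only [LinearMap.sub_apply, Module.End.one_apply, LinearMap.smul_apply, hgv,
      sub_smul, one_smul]
    abel
  -- `A μ` is invertible for `μ ≠ 1` and commutes with `s`
  have hAunit : ∀ μ : k, μ ≠ 1 →
      IsUnit ((1 - μ) • (1 : Module.End k V) - μ • (u - 1)) := by
    intro μ hμ
    have h1μ : (1 : k) - μ ≠ 0 := sub_ne_zero.mpr (Ne.symm hμ)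
    have hc : (1 - μ) * ((1 - μ)⁻¹ * μ) = μ := by field_simp
    have hfact : ((1 - μ) • (1 : Module.End k V)) *
        (1 - ((1 - μ)⁻¹ * μ) • (u - 1))
        = (1 - μ) • (1 : Module.End k V) - μ • (u - 1) := by
      rw [mul_sub, mul_one, smul_mul_assoc, one_mul, smul_smul, hc]
    rw [← hfact]
    refine IsUnit.mul ?_ (IsNilpotent.isUnit_one_sub (hunip.smul _))
    exact ⟨⟨(1 - μ) • 1, (1 - μ)⁻¹ • 1, by
      rw [smul_mul_assoc, one_mul, smul_smul, mul_inv_cancel₀ h1μ, one_smul], by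
      rw [smul_mul_assoc, one_mul, smul_smul, inv_mul_cancel₀ h1μ, one_smul]⟩, rfl⟩
  have hAs : ∀ μ : k, Commute ((1 - μ) • (1 : Module.End k V) - μ • (u - 1)) s :=
    fun μ => ((Commute.one_left s).smul_left _).sub_left (hsN.symm.smul_left _)
  -- injectivity of `1 - g` on each eigenspace with `μ ≠ 1`
  have hinj : ∀ (μ : k), μ ≠ 1 → ∀ v ∈ Module.End.eigenspace s μ,
      (1 - g) v = 0 → v = 0 := by
    intro μ hμ v hv h0
    obtain ⟨B, hBA, _, _⟩ := exists_inv_commute (hAunit μ hμ) (hAs μ)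
    calc v = (B * ((1 - μ) • (1 : Module.End k V) - μ • (u - 1))) v := by
          rw [hBA]; rfl
    _ = B (((1 - μ) • (1 : Module.End k V) - μ • (u - 1)) v) := rfl
    _ = B ((1 - g) v) := by rw [← hAval μ v hv]
    _ = 0 := by rw [h0, map_zero]
  -- surjectivity of `1 - g` on each eigenspace with `μ ≠ 1`
  have hsurj : ∀ (μ : k), μ ≠ 1 → Module.End.eigenspace s μ ≤
      Submodule.map (1 - g) (Module.End.eigenspace s μ) := by
    intro μ hμ w hw
    obtain ⟨B, _, hAB, hBs⟩ := exists_inv_commute (hAunit μ hμ) (hAs μ)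
    have hBmem : B w ∈ Module.End.eigenspace s μ := by
      rw [Module.End.mem_eigenspace_iff]
      calc s (B w) = (s * B) w := rfl
      _ = (B * s) w := by rw [hBs.symm.eq]
      _ = B (s w) := rfl
      _ = μ • B w := by rw [Module.End.mem_eigenspace_iff.mp hw, map_smul]
    refine ⟨B w, hBmem, ?_⟩
    rw [hAval μ _ hBmem]
    calc ((1 - μ) • (1 : Module.End k V) - μ • (u - 1)) (B w)
        = (((1 - μ) • (1 : Module.End k V) - μ • (u - 1)) * B) w := rfl
    _ = (1 : Module.End k V) w := by rw [hAB]
    _ = w := rfl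
  -- the complementary subspace `W'`
  set W' : Submodule k V := ⨆ μ : {μ : k // μ ≠ 1}, Module.End.eigenspace s μ.1
    with hW'def
  have htop : LinearMap.ker (s - 1) ⊔ W' = ⊤ := by
    rw [← top_le_iff, ← hdiag]
    refine iSup_le fun μ => ?_
    by_cases hμ : μ = 1
    · subst hμ; rw [← hW]; exact le_sup_left
    · exact le_trans (le_iSup (fun μ : {μ : k // μ ≠ 1} =>
        Module.End.eigenspace s μ.1) ⟨μ, hμ⟩) le_sup_right
  have hdisj : Disjoint (LinearMap.ker (s - 1)) W' := by
    rw [hW]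
    refine (Module.End.eigenspaces_iSupIndep s 1).mono_right ?_
    exact iSup_le fun μ => le_iSup₂ (f := fun (j : k) (_ : j ≠ 1) =>
      Module.End.eigenspace s j) μ.1 μ.2
  -- `1 - g` maps `W'` onto `W'`
  have hmapW' : Submodule.map (1 - g) W' = W' := by
    refine le_antisymm ?_ ?_
    · rw [hW'def, Submodule.map_iSup]
      refine iSup_le fun μ => le_trans ?_ (le_iSup (fun μ : {μ : k // μ ≠ 1} =>
        Module.End.eigenspace s μ.1) μ)
      rintro x ⟨v, hv, rfl⟩
      have h1 : (1 - g) v = v - g v := rfl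
      rw [h1]
      exact Submodule.sub_mem _ hv (hginv μ.1 v hv)
    · refine iSup_le fun μ => le_trans (hsurj μ.1 μ.2) (Submodule.map_mono ?_)
      exact le_iSup (fun μ : {μ : k // μ ≠ 1} => Module.End.eigenspace s μ.1) μ
  -- hence `1 - g` is injective on `W'` (finite dimension)
  have hmem' : ∀ x ∈ W', (1 - g) x ∈ W' := fun x hx =>
    hmapW' ▸ Submodule.mem_map_of_mem hx
  have hkerW' : ∀ v ∈ W', (1 - g) v = 0 → v = 0 := by
    have hres : Function.Surjective ((1 - g).restrict hmem') := by
      rintro ⟨y, hy⟩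
      rw [← hmapW'] at hy
      obtain ⟨x, hx, hxy⟩ := hy
      exact ⟨⟨x, hx⟩, Subtype.ext hxy⟩
    have hinj' : Function.Injective ((1 - g).restrict hmem') :=
      (LinearMap.injective_iff_surjective).mpr hres
    intro v hv h0
    have heq : ((1 - g).restrict hmem') ⟨v, hv⟩ = ((1 - g).restrict hmem') 0 := by
      apply Subtype.ext
      simpa [LinearMap.restrict_apply] using h0
    simpa using hinj' heq
  -- decompose any vector as `w + w'`
  have hdecomp : ∀ v : V, ∃ w ∈ LinearMap.ker (s - 1), ∃ w' ∈ W', v = w + w' := by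
    intro v
    have hv : v ∈ LinearMap.ker (s - 1) ⊔ W' := htop ▸ Submodule.mem_top
    obtain ⟨w, hw, w', hw', rfl⟩ := Submodule.mem_sup.mp hv
    exact ⟨w, hw, w', hw', rfl⟩
  have honeg : ∀ w ∈ LinearMap.ker (s - 1), (1 - g) w ∈ LinearMap.ker (s - 1) := by
    intro w hw
    have h1 : (1 - g) w = w - g w := rfl
    rw [h1]
    exact Submodule.sub_mem _ hw (hmemW w hw)
  -- (b1)
  have hb1 : LinearMap.ker (s - 1) ⊔ LinearMap.range (1 - g) = ⊤ := by
    rw [← top_le_iff, ← htop]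
    refine sup_le_sup_left ?_ _
    rw [← hmapW']
    exact LinearMap.map_le_range
  -- (a2)
  have ha2 : LinearMap.ker (1 - g) ≤ LinearMap.ker (s - 1) := by
    intro v hv
    rw [LinearMap.mem_ker] at hv
    obtain ⟨w, hw, w', hw', rfl⟩ := hdecomp v
    have hsum : (1 - g) w + (1 - g) w' = 0 := by rw [← map_add, hv]
    have hneg : (1 - g) w' = -((1 - g) w) := by
      rw [eq_neg_iff_add_eq_zero, add_comm]; exact hsum
    have h1 : (1 - g) w' ∈ LinearMap.ker (s - 1) := by
      rw [hneg]; exact Submodule.neg_mem _ (honeg w hw)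
    have h0 : (1 - g) w' = 0 :=
      Submodule.disjoint_def.mp hdisj _ h1 (hmem' w' hw')
    have hw'0 : w' = 0 := hkerW' w' hw' h0
    rw [hw'0, add_zero]
    exact hw
  -- (b2)
  have hb2 : LinearMap.ker (s - 1) ⊓ LinearMap.range (1 - g)
      = Submodule.map (1 - g) (LinearMap.ker (s - 1)) := by
    refine le_antisymm ?_ (le_inf ?_ ?_)
    · rintro x ⟨hxW, v, rfl⟩
      obtain ⟨w, hw, w', hw', rfl⟩ := hdecomp v
      rw [map_add] at hxW ⊢
      have h1 : (1 - g) w' ∈ LinearMap.ker (s - 1) := by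
        have h2 : (1 - g) w' = ((1 - g) w + (1 - g) w') - (1 - g) w := by abel
        rw [h2]
        exact Submodule.sub_mem _ hxW (honeg w hw)
      have hw'0 : w' = 0 :=
        hkerW' w' hw' (Submodule.disjoint_def.mp hdisj _ h1 (hmem' w' hw'))
      rw [hw'0, map_zero, add_zero]
      exact Submodule.mem_map_of_mem hw
    · rintro x ⟨w, hw, rfl⟩
      exact honeg w hw
    · rintro x ⟨w, _, rfl⟩
      exact LinearMap.mem_range_self _ w
  exact ⟨hmemW, ha2, hb1, hb2⟩
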